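/- The Jacobian change-of-variables formula for Φ(ω,λ) = (ω/(1+λ²)^{1/4}, λ|ω|²/(1+λ²)^{1/2}): for every nonnegative measurable f on ℝ^{2n}×ℝ, ∫ f(z,t) dz dt = ∫ f(Φ(ω,λ)) |ω|² (1+λ²)^{−(n+1)/2} dω dλ. -/

import Mathlib

open MeasureTheory Real
open scoped ENNReal

/-- The underlying space `ℝ^{2n} × ℝ`. -/
abbrev HSp (n : ℕ) := (Fin (2 * n) → ℝ) × ℝ

/-- The change of variables `Φ(ω,λ) = (ω/(1+λ²)^{1/4}, λ|ω|²/(1+λ²)^{1/2})`. -/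
noncomputable def Phi {n : ℕ} (p : HSp n) : HSp n :=
  (((1 + p.2 ^ 2) ^ (-(1:ℝ)/4)) • p.1,
    p.2 * (∑ i, (p.1 i) ^ 2) / Real.sqrt (1 + p.2 ^ 2))

/-!
Φ factors through two fibrewise dilations. Writing `q z = |z|²` and `a λ = (1+λ²)^{-1/4}`,
one has `Φ(ω,λ) = (a λ • ω, q(a λ • ω) λ)`. By Fubini, first substitute `t = q(z) λ` for fixed
`z ≠ 0` (Jacobian `q z`), then `z = a(λ) ω` for fixed `λ` (Jacobian `a(λ)^{2n}`); the product
`q(a ω) a^{2n} = |ω|² a^{2n+2}` is the stated weight. The set `ω = 0` is null because `ω`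
ranges over a space of positive dimension.
-/

section Scaling

variable {α E : Type*} [MeasurableSpace α] [NormedAddCommGroup E] [NormedSpace ℝ E]
  [FiniteDimensional ℝ E] [MeasurableSpace E] [BorelSpace E] (μ : Measure E) [μ.IsAddHaarMeasure]

theorem lintegral_comp_smul_mul_ofReal {g : E → ℝ≥0∞} (hg : Measurable g) {c : ℝ} (hc : c ≠ 0) :
    ∫⁻ x, g (c • x) * ENNReal.ofReal (|c| ^ Module.finrank ℝ E) ∂μ = ∫⁻ x, g x ∂μ := by
  have hpos : 0 < |c| ^ Module.finrank ℝ E := by positivity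
  rw [lintegral_mul_const' _ _ ENNReal.ofReal_ne_top, ← lintegral_map hg (measurable_const_smul c),
    Measure.map_addHaar_smul μ hc, lintegral_smul_measure, abs_inv, abs_pow,
    ENNReal.ofReal_inv_of_pos hpos, smul_eq_mul, mul_comm, ← mul_assoc,
    ENNReal.mul_inv_cancel (ENNReal.ofReal_pos.2 hpos).ne' ENNReal.ofReal_ne_top, one_mul]

theorem lintegral_prod_comp_smul_snd (ν : Measure α) [SFinite ν] {f : α × E → ℝ≥0∞}
    (hf : Measurable f) {c : α → ℝ} (hc : Measurable c) (hc₀ : ∀ᵐ x ∂ν, c x ≠ 0) :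
    ∫⁻ p, f (p.1, c p.1 • p.2) * ENNReal.ofReal (|c p.1| ^ Module.finrank ℝ E) ∂ν.prod μ
      = ∫⁻ p, f p ∂ν.prod μ := by
  rw [lintegral_prod _ (by fun_prop), lintegral_prod _ hf.aemeasurable]
  refine lintegral_congr_ae (hc₀.mono fun x hx => ?_)
  exact lintegral_comp_smul_mul_ofReal μ (hf.comp measurable_prodMk_left) hx

theorem lintegral_prod_comp_smul_fst (ν : Measure α) [SFinite ν] {f : E × α → ℝ≥0∞}
    (hf : Measurable f) {c : α → ℝ} (hc : Measurable c) (hc₀ : ∀ᵐ y ∂ν, c y ≠ 0) :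
    ∫⁻ p, f (c p.2 • p.1, p.2) * ENNReal.ofReal (|c p.2| ^ Module.finrank ℝ E) ∂μ.prod ν
      = ∫⁻ p, f p ∂μ.prod ν := by
  rw [lintegral_prod_symm _ (by fun_prop), lintegral_prod_symm _ hf.aemeasurable]
  refine lintegral_congr_ae (hc₀.mono fun y hy => ?_)
  exact lintegral_comp_smul_mul_ofReal μ (hf.comp measurable_prodMk_right) hy

end Scaling

section SumSq

variable {ι : Type*} [Fintype ι]

theorem sum_sq_smul (c : ℝ) (z : ι → ℝ) : ∑ i, (c • z) i ^ 2 = c ^ 2 * ∑ i, z i ^ 2 := by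
  simp only [Pi.smul_apply, smul_eq_mul, mul_pow, Finset.mul_sum]

theorem sum_sq_pos_of_ne_zero {z : ι → ℝ} (hz : z ≠ 0) : 0 < ∑ i, z i ^ 2 := by
  obtain ⟨i, hi⟩ := Function.ne_iff.1 hz
  exact Finset.sum_pos' (fun j _ => sq_nonneg _) ⟨i, Finset.mem_univ i, pow_two_pos_of_ne_zero hi⟩

end SumSq

theorem Phi_eq_smul {n : ℕ} (p : HSp n) :
    Phi p = ((1 + p.2 ^ 2) ^ (-(1:ℝ)/4) • p.1,
      (∑ i, ((1 + p.2 ^ 2) ^ (-(1:ℝ)/4) • p.1) i ^ 2) • p.2) := by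
  have h : 0 < 1 + p.2 ^ 2 := by positivity
  have ha : ((1 + p.2 ^ 2) ^ (-(1:ℝ)/4)) ^ 2 = (√(1 + p.2 ^ 2))⁻¹ := by
    rw [← rpow_natCast, ← rpow_mul h.le, sqrt_eq_rpow, ← rpow_neg h.le]
    norm_num
  rw [sum_sq_smul, ha, smul_eq_mul]
  ext
  · rfl
  · simp only [Phi]; field_simp

theorem rpow_neg_quarter_pow {x : ℝ} (hx : 0 ≤ x) (n : ℕ) :
    (x ^ (-(1:ℝ)/4)) ^ 2 * (x ^ (-(1:ℝ)/4)) ^ (2 * n) = x ^ (-(((n : ℝ) + 1) / 2)) := by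
  rw [← pow_add, ← rpow_natCast, ← rpow_mul hx]
  push_cast; ring_nf

/-- The Jacobian change-of-variables formula for `Φ`: for every nonnegative measurable
`f`, `∫ f(z,t) dz dt = ∫ f(Φ(ω,λ)) |ω|² (1+λ²)^{-(n+1)/2} dω dλ`. -/
theorem phi_change_of_variables (n : ℕ) (hn : 1 ≤ n) (f : HSp n → ℝ≥0∞)
    (hf : Measurable f) :
    ∫⁻ x : HSp n, f x
      = ∫⁻ p in {p : HSp n | p.1 ≠ 0},
          f (Phi p) * ENNReal.ofReal
            ((∑ i, (p.1 i) ^ 2) * (1 + p.2 ^ 2) ^ (-(((n : ℝ) + 1) / 2))) := by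
  have : Nonempty (Fin (2 * n)) := ⟨⟨0, by omega⟩⟩
  have hz : ∀ᵐ z : Fin (2 * n) → ℝ, z ≠ 0 := compl_mem_ae_iff.2 (measure_singleton 0)
  set q : (Fin (2 * n) → ℝ) → ℝ := fun z => ∑ i, z i ^ 2
  set a : ℝ → ℝ := fun l => (1 + l ^ 2) ^ (-(1:ℝ)/4)
  have hq : Measurable q := by fun_prop
  have ha : Measurable a := by fun_prop
  rw [Measure.volume_eq_prod, Measure.restrict_eq_self_of_ae_mem (s := {p : HSp n | p.1 ≠ 0})
    (Measure.quasiMeasurePreserving_fst.ae hz),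
    ← lintegral_prod_comp_smul_snd volume volume hf hq
      (hz.mono fun _ hz => (sum_sq_pos_of_ne_zero hz).ne'),
    ← lintegral_prod_comp_smul_fst volume volume (by fun_prop) ha
      (Filter.Eventually.of_forall fun l => (rpow_pos_of_pos (by positivity) _).ne')]
  refine lintegral_congr fun ⟨w, l⟩ => ?_
  have hq₀ : 0 ≤ q (a l • w) := Finset.sum_nonneg fun i _ => sq_nonneg _
  have hJ : q (a l • w) * a l ^ (2 * n) = q w * (1 + l ^ 2) ^ (-(((n : ℝ) + 1) / 2)) := by
    rw [← rpow_neg_quarter_pow (by positivity)]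
    simp only [q, a, sum_sq_smul]; ring
  rw [← Phi_eq_smul (w, l), Module.finrank_self, Module.finrank_fin_fun, pow_one,
    abs_of_nonneg hq₀, abs_of_nonneg (by positivity : 0 ≤ a l), mul_assoc,
    ← ENNReal.ofReal_mul hq₀, hJ]
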